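/- arXiv:1202.5215 — 3 statements merged into one kernel-verified Lean document; each statement's English description precedes it below -/
import Mathlib

section
/- Let κ be an infinite cardinal. In the category whose objects are linear orders possessing a greatest element and whose morphisms are strictly monotone maps (which are not required to preserve the greatest element), the diagram whose objects are the ordinals α < κ and whose morphisms are the inclusions α ↪ β for α ≤ β has no colimit: there is no linear order L with a greatest element together with strictly monotone maps h_α : α → L satisfying h_β ∘ (inclusion of α into β) = h_α for all α ≤ β < κ, such that every compatible family of strictly monotone maps from the ordinals α < κ to a linear order with a greatest element factors through (L, (h_α)) via a unique strictly monotone map. -/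
open Cardinal

universe u

/-!
Suppose `L` with greatest element `t` were a colimit. Since the index ordinal is a limit, every
`h α x` lies strictly below some `h (α + 1) α ≤ t`, so the factorization `H : L → κ + 1` of
the cocone of inclusions must send `t` to the top `κ`. Now `κ + 1` embeds into `κ + 2` in two
strictly monotone ways, fixing every ordinal below `κ` and sending `κ` to `κ` or to `κ + 1`.
Composed with `H` they give two different factorizations of the cocone of inclusions into
`κ + 2`, contradicting uniqueness. Here `κ + 1` and `κ + 2` are modelled as
`WithTop o.ToType` and `WithTop (WithTop o.ToType)`.
-/

section OrdinalCocone

variable {o : Ordinal.{u}} {X : Type*}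

def IsStrictCocone [Preorder X] (o : Ordinal.{u})
    (h : ∀ α < o, {x : Ordinal.{u} // x < α} → X) : Prop :=
  (∀ α (hα : α < o), StrictMono (h α hα)) ∧
    ∀ α β (hα : α < o) (hβ : β < o) (hαβ : α ≤ β) (x : {x : Ordinal.{u} // x < α}),
      h β hβ ⟨x.1, x.2.trans_le hαβ⟩ = h α hα x

def iioCocone (j : Set.Iio o → X) : ∀ α < o, {x : Ordinal.{u} // x < α} → X :=
  fun _ hα x => j ⟨x.1, x.2.trans hα⟩

theorem isStrictCocone_iioCocone [Preorder X] {j : Set.Iio o → X} (hj : StrictMono j) :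
    IsStrictCocone o (iioCocone j) :=
  ⟨fun _ _ _ _ hxy => hj hxy, fun _ _ _ _ _ _ => rfl⟩

theorem IsStrictCocone.apply_lt_of_isSuccLimit [Preorder X] (ho : Order.IsSuccLimit o)
    {h : ∀ α < o, {x : Ordinal.{u} // x < α} → X} (hc : IsStrictCocone o h) {t : X}
    (ht : ∀ y, y ≤ t) (α : Ordinal.{u}) (hα : α < o) (x : {x : Ordinal.{u} // x < α}) :
    h α hα x < t := by
  have hα' : Order.succ α < o := ho.succ_lt hα
  calc h α hα x = h _ hα' ⟨x.1, x.2.trans (Order.lt_succ α)⟩ :=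
        (hc.2 _ _ hα hα' (Order.le_succ α) x).symm
    _ < h _ hα' ⟨α, Order.lt_succ α⟩ := hc.1 _ hα' x.2
    _ ≤ t := ht _

/-- `(L, h)` is a colimit of the ordinals `α < o` in the category of linear orders with a greatest
element and strictly monotone maps. -/
def IsTopColimit (o : Ordinal.{u}) {L : Type u} [LinearOrder L]
    (h : ∀ α < o, {x : Ordinal.{u} // x < α} → L) : Prop :=
  IsStrictCocone o h ∧
    ∀ (L' : Type u) [LinearOrder L'] (t' : L'), (∀ y : L', y ≤ t') →
      ∀ h' : ∀ α < o, {x : Ordinal.{u} // x < α} → L', IsStrictCocone o h' →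
        ∃! H : L → L', StrictMono H ∧ ∀ α (hα : α < o) x, H (h α hα x) = h' α hα x

theorem IsStrictCocone.eq_top_of_factor [Preorder X] (ho : Order.IsSuccLimit o)
    {h : ∀ α < o, {x : Ordinal.{u} // x < α} → X} (hc : IsStrictCocone o h) {t : X}
    (ht : ∀ y, y ≤ t) {H : X → WithTop o.ToType} (hH : StrictMono H)
    (hHh : ∀ α (hα : α < o) x,
      H (h α hα x) = iioCocone (fun y => ↑(Ordinal.ToType.mk y)) α hα x) :
    H t = ⊤ := by
  induction hy : H t using WithTop.recTopCoe with
  | top => rfl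
  | coe i =>
    obtain ⟨x, rfl⟩ := Ordinal.ToType.mk.surjective i
    have hx : Order.succ x.1 < o := ho.succ_lt x.2
    have := hH (hc.apply_lt_of_isSuccLimit ho ht _ hx ⟨x.1, Order.lt_succ _⟩)
    rw [hHh, hy] at this
    exact (lt_irrefl _ this).elim

theorem not_isTopColimit (ho : Order.IsSuccLimit o) {L : Type u} [LinearOrder L] {t : L}
    (ht : ∀ y, y ≤ t) (h : ∀ α < o, {x : Ordinal.{u} // x < α} → L) :
    ¬ IsTopColimit o h := by
  rintro ⟨hc, huniv⟩
  let j : Set.Iio o → WithTop o.ToType := fun x => Ordinal.ToType.mk x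
  have hj : StrictMono j := WithTop.coe_strictMono.comp Ordinal.ToType.mk.strictMono
  obtain ⟨H, ⟨hH, hHh⟩, -⟩ :=
    huniv (WithTop o.ToType) ⊤ (fun _ => le_top) (iioCocone j) (isStrictCocone_iioCocone hj)
  obtain ⟨_, -, huniq⟩ := huniv (WithTop (WithTop o.ToType)) ⊤ (fun _ => le_top)
    (iioCocone (WithTop.some ∘ j)) (isStrictCocone_iioCocone (WithTop.coe_strictMono.comp hj))
  have factor (g : WithTop o.ToType → WithTop (WithTop o.ToType)) (hg : StrictMono g)
      (hgi : ∀ i : o.ToType, g i = ((i : WithTop o.ToType) : WithTop (WithTop o.ToType))) :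
      StrictMono (g ∘ H) ∧ ∀ α (hα : α < o) x,
        (g ∘ H) (h α hα x) = iioCocone (WithTop.some ∘ j) α hα x :=
    ⟨hg.comp hH, fun α hα x => by rw [Function.comp_apply, hHh]; exact hgi _⟩
  have hsame := (huniq _ (factor WithTop.some WithTop.coe_strictMono fun _ => rfl)).trans
    (huniq _ (factor (WithTop.map WithTop.some)
      (WithTop.strictMono_map_iff.2 WithTop.coe_strictMono) fun _ => rfl)).symm
  have := congrFun hsame t
  simp [hc.eq_top_of_factor ho ht hH hHh] at this

end OrdinalCocone

/-- Let `κ` be an infinite cardinal.  In the category whose objects are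
linear orders possessing a greatest element and whose morphisms are strictly monotone maps
(not required to preserve the greatest element), the diagram of the ordinals `α < κ` with
the inclusions `α ↪ β` has no colimit: there is no linear order `L` with a greatest element
`t`, together with compatible strictly monotone maps `h_α : α → L`, through which every
compatible family of strictly monotone maps from the ordinals `α < κ` to a linear order
with a greatest element factors via a unique strictly monotone map. -/
theorem stmt_5 (κ : Cardinal.{u}) (hκ : ℵ₀ ≤ κ) :
    ¬ ∃ (L : Type u) (_ : LinearOrder L) (t : L)
        (h : ∀ α : Ordinal.{u}, α < κ.ord → ({x : Ordinal.{u} // x < α} → L)),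
        (∀ y : L, y ≤ t) ∧
        (∀ α (hα : α < κ.ord), StrictMono (h α hα)) ∧
        (∀ α β (hα : α < κ.ord) (hβ : β < κ.ord) (hαβ : α ≤ β)
          (x : {x : Ordinal.{u} // x < α}),
            h β hβ ⟨x.1, lt_of_lt_of_le x.2 hαβ⟩ = h α hα x) ∧
        (∀ (L' : Type u) [LinearOrder L'] (t' : L'), (∀ y : L', y ≤ t') →
          ∀ h' : ∀ α : Ordinal.{u}, α < κ.ord → ({x : Ordinal.{u} // x < α} → L'),
            (∀ α (hα : α < κ.ord), StrictMono (h' α hα)) →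
            (∀ α β (hα : α < κ.ord) (hβ : β < κ.ord) (hαβ : α ≤ β)
              (x : {x : Ordinal.{u} // x < α}),
                h' β hβ ⟨x.1, lt_of_lt_of_le x.2 hαβ⟩ = h' α hα x) →
            ∃! H : L → L',
              StrictMono H ∧
                ∀ α (hα : α < κ.ord) (x : {x : Ordinal.{u} // x < α}),
                  H (h α hα x) = h' α hα x) := by
  rintro ⟨L, _, t, h, ht, hmono, hcompat, huniv⟩
  exact not_isTopColimit (Cardinal.isSuccLimit_ord hκ) ht h
    ⟨⟨hmono, hcompat⟩, fun L' _ t' ht' h' hc' => huniv L' t' ht' h' hc'.1 hc'.2⟩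
end

section
/- Let L be a first-order language. Suppose (Aₙ)_{n ∈ ℕ} and (Bₙ)_{n ∈ ℕ} are L-structures, aₙ : Aₙ → A_{n+1} and bₙ : Bₙ → B_{n+1} are elementary embeddings, and hₙ : Aₙ → Bₙ and kₙ : Bₙ → A_{n+1} are L-homomorphisms such that kₙ ∘ hₙ = aₙ and h_{n+1} ∘ kₙ = bₙ for every n. Then A₀ and B₀ are elementarily equivalent: they satisfy the same L-sentences. -/
open FirstOrder Language

universe u v w

/-- Suppose `(Aₙ)` and `(Bₙ)` are `L`-structures, `aₙ : Aₙ → A_{n+1}` and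
`bₙ : Bₙ → B_{n+1}` are elementary embeddings, and `hₙ : Aₙ → Bₙ`, `kₙ : Bₙ → A_{n+1}` are
`L`-homomorphisms with `kₙ ∘ hₙ = aₙ` and `h_{n+1} ∘ kₙ = bₙ` for every `n`.  Then `A₀`
and `B₀` are elementarily equivalent. -/
theorem stmt_8 (L : FirstOrder.Language.{u, v}) (A B : ℕ → Type w)
    [∀ n, L.Structure (A n)] [∀ n, L.Structure (B n)]
    (a : ∀ n, A n ↪ₑ[L] A (n + 1)) (b : ∀ n, B n ↪ₑ[L] B (n + 1))
    (h : ∀ n, A n →[L] B n) (k : ∀ n, B n →[L] A (n + 1))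
    (hka : ∀ n (x : A n), k n (h n x) = a n x)
    (hhb : ∀ n (y : B n), h (n + 1) (k n y) = b n y) :
    A 0 ≅[L] B 0 := by
  have hinj : ∀ n, Function.Injective (h n) := fun n x y hxy =>
    (a n).injective (by rw [← hka, ← hka, hxy])
  have kinj : ∀ n, Function.Injective (k n) := fun n x y hxy =>
    (b n).injective (by rw [← hhb, ← hhb, hxy])
  have key : ∀ {m : ℕ} (φ : L.BoundedFormula Empty m) (n : ℕ),
      (∀ (v : Empty → A n) (xs : Fin m → A n),
        (φ.Realize v xs ↔ φ.Realize (h n ∘ v) (h n ∘ xs))) ∧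
      (∀ (v : Empty → B n) (xs : Fin m → B n),
        (φ.Realize v xs ↔ φ.Realize (k n ∘ v) (k n ∘ xs))) := by
    intro m φ
    induction φ with
    | falsum =>
      intro n
      exact ⟨fun v xs => Iff.rfl, fun v xs => Iff.rfl⟩
    | equal t₁ t₂ =>
      intro n
      constructor
      · intro v xs
        simp only [BoundedFormula.Realize, ← Sum.comp_elim, HomClass.realize_term]
        exact ⟨fun hh => by rw [hh], fun hh => hinj n hh⟩
      · intro v xs
        simp only [BoundedFormula.Realize, ← Sum.comp_elim, HomClass.realize_term]
        exact ⟨fun hh => by rw [hh], fun hh => kinj n hh⟩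
    | rel R ts =>
      intro n
      constructor
      · intro v xs
        simp only [BoundedFormula.Realize, ← Sum.comp_elim, HomClass.realize_term]
        constructor
        · intro hr
          exact (h n).map_rel R _ hr
        · intro hr
          have := (k n).map_rel R _ hr
          have heq : (⇑(k n) ∘ fun i => (h n) ((ts i).realize (Sum.elim v xs))) =
              ⇑(a n) ∘ fun i => (ts i).realize (Sum.elim v xs) := by
            funext i; exact hka n _
          rw [heq] at this
          exact ((a n).toEmbedding.map_rel R _).mp this
      · intro v xs
        simp only [BoundedFormula.Realize, ← Sum.comp_elim, HomClass.realize_term]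
        constructor
        · intro hr
          exact (k n).map_rel R _ hr
        · intro hr
          have := (h (n + 1)).map_rel R _ hr
          have heq : (⇑(h (n + 1)) ∘ fun i => (k n) ((ts i).realize (Sum.elim v xs))) =
              ⇑(b n) ∘ fun i => (ts i).realize (Sum.elim v xs) := by
            funext i; exact hhb n _
          rw [heq] at this
          exact ((b n).toEmbedding.map_rel R _).mp this
    | imp φ ψ ihφ ihψ =>
      intro n
      refine ⟨fun v xs => ?_, fun v xs => ?_⟩
      · simp only [BoundedFormula.realize_imp, (ihφ n).1 v xs, (ihψ n).1 v xs]
      · simp only [BoundedFormula.realize_imp, (ihφ n).2 v xs, (ihψ n).2 v xs]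
    | all φ ih =>
      intro n
      constructor
      · intro v xs
        simp only [BoundedFormula.realize_all]
        constructor
        · intro hall z
          have h1 := ((ih n).2 (h n ∘ v) (Fin.snoc (h n ∘ xs) z))
          rw [h1]
          have h2 : (k n) ∘ Fin.snoc ((h n) ∘ xs) z =
              Fin.snoc ((k n) ∘ (h n) ∘ xs) (k n z) := Fin.comp_snoc _ _ _
          rw [h2]
          have heqv : (k n) ∘ (h n) ∘ v = (a n) ∘ v := by funext i; exact hka n _
          have heqx : (k n) ∘ (h n) ∘ xs = (a n) ∘ xs := by funext i; exact hka n _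
          rw [heqv, heqx]
          have := ((a n).map_boundedFormula φ.all v xs).mpr
            (BoundedFormula.realize_all.mpr hall)
          rw [BoundedFormula.realize_all] at this
          exact this (k n z)
        · intro hall y
          have h1 := (ih n).1 v (Fin.snoc xs y)
          rw [h1, Fin.comp_snoc]
          exact hall (h n y)
      · intro v xs
        simp only [BoundedFormula.realize_all]
        constructor
        · intro hall z
          have h1 := ((ih (n + 1)).1 (k n ∘ v) (Fin.snoc (k n ∘ xs) z))
          rw [h1]
          have h2 : (h (n + 1)) ∘ Fin.snoc ((k n) ∘ xs) z =
              Fin.snoc ((h (n + 1)) ∘ (k n) ∘ xs) (h (n + 1) z) := Fin.comp_snoc _ _ _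
          rw [h2]
          have heqv : (h (n + 1)) ∘ (k n) ∘ v = (b n) ∘ v := by funext i; exact hhb n _
          have heqx : (h (n + 1)) ∘ (k n) ∘ xs = (b n) ∘ xs := by funext i; exact hhb n _
          rw [heqv, heqx]
          have := ((b n).map_boundedFormula φ.all v xs).mpr
            (BoundedFormula.realize_all.mpr hall)
          rw [BoundedFormula.realize_all] at this
          exact this (h (n + 1) z)
        · intro hall y
          have h1 := (ih n).2 v (Fin.snoc xs y)
          rw [h1, Fin.comp_snoc]
          exact hall (k n y)
  rw [elementarilyEquivalent_iff]
  intro φ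
  have := (key φ 0).1 default default
  simpa [Sentence.Realize, Formula.Realize, Subsingleton.elim ((h 0) ∘ default) default,
    Subsingleton.elim ((h 0) ∘ (default : Fin 0 → A 0)) default] using this
end

section
/- Let κ be a regular uncountable cardinal. Let StrΣ denote the category whose objects are triples (M, m, P) with M a set, m : M × M → M a binary operation and P ⊆ M a subset, and whose morphisms (M, m, P) → (N, n, Q) are functions f : M → N satisfying f(m(x, y)) = n(f(x), f(y)) for all x, y ∈ M and f(P) ⊆ Q. Let 𝒜 be the full subcategory of StrΣ consisting of those objects (M, m, P) such that (M, m) is an abelian group and P = R_ℤ(M). Suppose the inclusion functor 𝒜 ↪ StrΣ preserves κ-directed colimits, i.e. whenever D is a diagram in 𝒜 indexed by a κ-directed partial order and (C, (c_i)) is a colimit cocone of D in 𝒜, then (C, (c_i)) is also a colimit cocone of D in StrΣ. Then for every abelian group G, R_ℤ(G) = R_ℤ^κ(G). -/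
open Cardinal

universe u

/-- The radical singly generated by `X`: `R_X(G)` is the intersection of the kernels of all
group homomorphisms `G → X`. -/
def radical (X : Type*) (G : Type*) [AddCommGroup X] [AddCommGroup G] : AddSubgroup G :=
  ⨅ f : G →+ X, f.ker

/-- `R_X^κ(G)`: the sum of the subgroups `R_X(A)` (viewed inside `G` via the inclusion
`A ≤ G`), where `A` ranges over the subgroups of `G` of cardinality less than `κ`. -/
def radicalK (κ : Cardinal.{u}) (X : Type v) (G : Type u)
    [AddCommGroup X] [AddCommGroup G] : AddSubgroup G :=
  ⨆ A ∈ {A : AddSubgroup G | #A < κ}, (radical X A).map A.subtype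

/-- An object of the category `StrΣ`: a set equipped with a binary operation and a unary
predicate (a subset). -/
structure StrSig : Type (u + 1) where
  carrier : Type u
  op : carrier → carrier → carrier
  pred : Set carrier

/-- Morphisms of `StrΣ`: functions commuting with the binary operations and preserving the
predicates in the forward direction. -/
def IsStrHom (M N : StrSig.{u}) (f : M.carrier → N.carrier) : Prop :=
  (∀ x y : M.carrier, f (M.op x y) = N.op (f x) (f y)) ∧ ∀ x ∈ M.pred, f x ∈ N.pred

/-- The objects of the full subcategory `𝒜` of `StrΣ`: those `(M, m, P)` such that
`(M, m)` is an abelian group and `P = R_ℤ(M)`. -/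
def InA (M : StrSig.{u}) : Prop :=
  ∃ inst : AddCommGroup M.carrier,
    (∀ x y : M.carrier, M.op x y = x + y) ∧
    M.pred = (radical ℤ M.carrier : AddSubgroup M.carrier)

/-- A diagram in `StrΣ` indexed by a preorder `I`. -/
structure DiagS (I : Type u) [Preorder I] : Type (u + 1) where
  obj : I → StrSig.{u}
  map : ∀ i j : I, i ≤ j → (obj i).carrier → (obj j).carrier
  map_isHom : ∀ (i j : I) (h : i ≤ j), IsStrHom (obj i) (obj j) (map i j h)
  map_id : ∀ (i : I) (x : (obj i).carrier), map i i le_rfl x = x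
  map_comp : ∀ (i j k : I) (hij : i ≤ j) (hjk : j ≤ k) (x : (obj i).carrier),
    map j k hjk (map i j hij x) = map i k (hij.trans hjk) x

/-- `(C, c)` is a colimit cocone of the diagram `D` in the full subcategory of `StrΣ`
determined by the predicate `S`: it is a cocone, and every cocone of `D` with vertex
satisfying `S` factors through it via a unique `StrΣ`-morphism.  (Taking `S := fun _ => True`
gives colimit cocones in `StrΣ` itself.) -/
def IsColimitAmong (S : StrSig.{u} → Prop) {I : Type u} [Preorder I] (D : DiagS I)
    (C : StrSig.{u}) (c : ∀ i : I, (D.obj i).carrier → C.carrier) : Prop :=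
  (∀ i : I, IsStrHom (D.obj i) C (c i)) ∧
  (∀ (i j : I) (hij : i ≤ j) (x : (D.obj i).carrier), c j (D.map i j hij x) = c i x) ∧
  ∀ (Z : StrSig.{u}), S Z → ∀ z : ∀ i : I, (D.obj i).carrier → Z.carrier,
    (∀ i : I, IsStrHom (D.obj i) Z (z i)) →
    (∀ (i j : I) (hij : i ≤ j) (x : (D.obj i).carrier), z j (D.map i j hij x) = z i x) →
    ∃! g : C.carrier → Z.carrier, IsStrHom C Z g ∧ ∀ (i : I) (x : (D.obj i).carrier),
      g (c i x) = z i x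

/-!
`G` is the `κ`-directed union of its subgroups of cardinality `< κ`, and `(G, +, R_ℤ(G))` is the
colimit in `𝒜` of these subgroups, each carrying its own radical: a compatible family of
homomorphisms glues to a homomorphism because any two elements of `G` lie in a common small
subgroup. If this cocone is also a colimit in `StrΣ`, test it against the cocone of inclusions
with vertex `(G, +, R_ℤ^κ(G))`: the mediating map is the identity of `G`, and since it preserves
the predicates, `R_ℤ(G) ⊆ R_ℤ^κ(G)`. The reverse inclusion holds for every group.
-/

section Radical

variable {X G H : Type*} [AddCommGroup X] [AddCommGroup G] [AddCommGroup H]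

lemma map_mem_radical (f : G →+ H) {x : G} (hx : x ∈ radical X G) : f x ∈ radical X H := by
  simp only [radical, AddSubgroup.mem_iInf, AddMonoidHom.mem_ker] at hx ⊢
  exact fun g => hx (g.comp f)

end Radical

section RadicalK

variable (κ : Cardinal.{u}) {X : Type v} {G : Type u} [AddCommGroup X] [AddCommGroup G]

lemma map_subtype_radical_le_radicalK {A : AddSubgroup G} (hA : #A < κ) :
    (radical X A).map A.subtype ≤ radicalK κ X G :=
  le_iSup₂_of_le (f := fun (B : AddSubgroup G) (_ : #B < κ) => (radical X B).map B.subtype)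
    A hA le_rfl

lemma radicalK_le_radical : radicalK κ X G ≤ radical X G :=
  iSup₂_le fun A _ => AddSubgroup.map_le_iff_le_comap.mpr fun _ hx => map_mem_radical A.subtype hx

end RadicalK

namespace AddSubgroup

variable {G : Type u} [AddCommGroup G]

lemma cardinalMk_closure_le_max (s : Set G) : #(closure s) ≤ max #s ℵ₀ := by
  rw [FreeAddGroup.closure_eq_range]
  refine mk_range_le.trans ?_
  cases isEmpty_or_nonempty s <;> simp

lemma cardinalMk_closure_lt {κ : Cardinal.{u}} (hκ : ℵ₀ < κ) {s : Set G} (hs : #s < κ) :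
    #(closure s) < κ :=
  (cardinalMk_closure_le_max s).trans_lt (max_lt hs hκ)

end AddSubgroup

abbrev SmallAddSubgroup (κ : Cardinal.{u}) (G : Type u) [AddCommGroup G] : Type u :=
  {A : AddSubgroup G // #A < κ}

namespace SmallAddSubgroup

variable {κ : Cardinal.{u}} {G : Type u} [AddCommGroup G]

def closure (hκ : ℵ₀ < κ) (s : Set G) (hs : s.Finite) : SmallAddSubgroup κ G :=
  ⟨AddSubgroup.closure s, AddSubgroup.cardinalMk_closure_lt hκ (hs.lt_aleph0.trans hκ)⟩

lemma subset_closure (hκ : ℵ₀ < κ) {s : Set G} (hs : s.Finite) : s ⊆ (closure hκ s hs).val :=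
  AddSubgroup.subset_closure

def inf (A B : SmallAddSubgroup κ G) : SmallAddSubgroup κ G :=
  ⟨A.val ⊓ B.val, (mk_le_mk_of_subset fun _ h => h.1).trans_lt A.2⟩

lemma exists_upperBound (hreg : κ.IsRegular) (hκ : ℵ₀ < κ) (s : Set (SmallAddSubgroup κ G))
    (hs : #s < κ) : ∃ B : SmallAddSubgroup κ G, ∀ A ∈ s, A ≤ B := by
  have hU : #(⋃ A ∈ s, (A.val : Set G)) < κ :=
    (card_biUnion_lt_iff_forall_of_isRegular hreg hs).mpr fun A _ => A.2
  exact ⟨⟨_, AddSubgroup.cardinalMk_closure_lt hκ hU⟩, fun A hA =>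
    fun x hx => AddSubgroup.subset_closure (Set.mem_biUnion hA hx)⟩

end SmallAddSubgroup

namespace StrSig

abbrev ofAddCommGroup (G : Type u) [AddCommGroup G] (P : Set G) : StrSig.{u} :=
  ⟨G, (· + ·), P⟩

variable {G H : Type u} [AddCommGroup G] [AddCommGroup H]

lemma isStrHom_ofAddCommGroup {P : Set G} {Q : Set H} (f : G →+ H) (hf : ∀ x ∈ P, f x ∈ Q) :
    IsStrHom (ofAddCommGroup G P) (ofAddCommGroup H Q) f :=
  ⟨map_add f, hf⟩

lemma inA_ofAddCommGroup_radical : InA (ofAddCommGroup G (radical ℤ G)) :=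
  ⟨inferInstance, fun _ _ => rfl, rfl⟩

end StrSig

open StrSig SmallAddSubgroup

section RadicalDiagram

variable (κ : Cardinal.{u}) (G : Type u) [AddCommGroup G]

def radicalDiagram : DiagS (SmallAddSubgroup κ G) where
  obj A := ofAddCommGroup A.val (radical ℤ A.val)
  map _ _ h := AddSubgroup.inclusion h
  map_isHom _ _ _ := isStrHom_ofAddCommGroup _ fun _ hx => map_mem_radical _ hx
  map_id _ _ := rfl
  map_comp _ _ _ _ _ _ := rfl

variable {κ G}

lemma radicalDiagram_cocone_eq {Z : StrSig.{u}}
    {z : ∀ A : SmallAddSubgroup κ G, A.val → Z.carrier}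
    (hz : ∀ A B (hAB : A ≤ B) (x : A.val), z B ((radicalDiagram κ G).map A B hAB x) = z A x)
    {A B : SmallAddSubgroup κ G} {x : G} (hA : x ∈ A.val) (hB : x ∈ B.val) :
    z A ⟨x, hA⟩ = z B ⟨x, hB⟩ :=
  (hz (A.inf B) A (inf_le_left (a := A.val)) ⟨x, hA, hB⟩).trans
    (hz (A.inf B) B (inf_le_right (a := A.val)) ⟨x, hA, hB⟩).symm

lemma isColimitAmong_inA_radicalDiagram (hκ : ℵ₀ < κ) :
    IsColimitAmong InA (radicalDiagram κ G) (ofAddCommGroup G (radical ℤ G))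
      (fun A => A.val.subtype) := by
  refine ⟨fun A => isStrHom_ofAddCommGroup _ fun _ hx => map_mem_radical _ hx,
    fun _ _ _ _ => rfl, ?_⟩
  rintro Z ⟨_, hop, hpred⟩ z hz hcompat
  let σ (x : G) : SmallAddSubgroup κ G := closure hκ {x} (Set.finite_singleton x)
  have hσ (x : G) : x ∈ (σ x).val := subset_closure hκ _ rfl
  let g (x : G) : Z.carrier := z (σ x) ⟨x, hσ x⟩
  have hg (A : SmallAddSubgroup κ G) (x : G) (hx : x ∈ A.val) : g x = z A ⟨x, hx⟩ :=
    radicalDiagram_cocone_eq hcompat _ _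
  have hadd (x y : G) : g (x + y) = g x + g y := by
    let A := closure hκ {x, y} (Set.toFinite _)
    have hx : x ∈ A.val := subset_closure hκ _ (Set.mem_insert x _)
    have hy : y ∈ A.val := subset_closure hκ _ (Set.mem_insert_of_mem x rfl)
    rw [hg A x hx, hg A y hy, hg A _ (add_mem hx hy), ← hop]
    exact (hz A).1 ⟨x, hx⟩ ⟨y, hy⟩
  refine ⟨g, ⟨⟨fun x y => (hadd x y).trans (hop _ _).symm, fun x hx => ?_⟩,
    fun A ⟨x, hx⟩ => hg A x hx⟩, ?_⟩
  · rw [hpred]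
    exact map_mem_radical (AddMonoidHom.mk' g hadd) hx
  · rintro g' ⟨-, hg'⟩
    funext x
    exact (hg' (σ x) ⟨x, hσ x⟩).trans (hg _ _ _).symm

lemma radical_le_radicalK_of_isColimitAmong (hκ : ℵ₀ < κ)
    (h : IsColimitAmong (fun _ => True) (radicalDiagram κ G) (ofAddCommGroup G (radical ℤ G))
      (fun A => A.val.subtype)) :
    radical ℤ G ≤ radicalK κ ℤ G := by
  obtain ⟨g, ⟨hg, hgc⟩, -⟩ := h.2.2 (ofAddCommGroup G (radicalK κ ℤ G)) trivial
    (fun A => A.val.subtype)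
    (fun A => isStrHom_ofAddCommGroup _ fun x hx =>
      map_subtype_radical_le_radicalK κ A.2 ⟨x, hx, rfl⟩)
    fun _ _ _ _ => rfl
  have hid (x : G) : g x = x :=
    hgc (closure hκ {x} (Set.finite_singleton x)) ⟨x, subset_closure hκ _ rfl⟩
  intro x hx
  simpa only [hid, SetLike.mem_coe] using hg.2 x hx

end RadicalDiagram

/-- Let `κ` be a regular uncountable cardinal.  If the inclusion functor
`𝒜 ↪ StrΣ` preserves `κ`-directed colimits — i.e. every colimit cocone in `𝒜` of a diagram
in `𝒜` indexed by a `κ`-directed partial order is also a colimit cocone in `StrΣ` — then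
`R_ℤ(G) = R_ℤ^κ(G)` for every abelian group `G`. -/
theorem stmt_13 (κ : Cardinal.{u}) (hreg : κ.IsRegular) (huncount : ℵ₀ < κ)
    (hpres : ∀ (I : Type u) (instI : PartialOrder I),
      (∀ s : Set I, #s < κ → ∃ k : I, ∀ i ∈ s, i ≤ k) →
      ∀ D : DiagS I, (∀ i : I, InA (D.obj i)) →
      ∀ (C : StrSig.{u}) (c : ∀ i : I, (D.obj i).carrier → C.carrier),
        InA C → IsColimitAmong InA D C c →
        IsColimitAmong (fun _ => True) D C c) :
    ∀ (G : Type u) [AddCommGroup G], radical ℤ G = radicalK κ ℤ G := by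
  intro G _
  refine le_antisymm (radical_le_radicalK_of_isColimitAmong huncount ?_) (radicalK_le_radical κ)
  exact hpres _ _ (exists_upperBound hreg huncount) (radicalDiagram κ G)
    (fun _ => inA_ofAddCommGroup_radical) _ _ inA_ofAddCommGroup_radical
    (isColimitAmong_inA_radicalDiagram huncount)
end
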